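/- Let N ≥ 1, 0 < θ < 2, K ≥ 0, and φ ∈ L^1_K. Assume condition (F) with exponent p, and let u be a solution to problem (P) satisfying sup_{t>0} (t+1)^{(N/θ)(1−1/q) − ℓ/θ} |||u(·,t)|||_{q,ℓ} < ∞ for all 1 ≤ q ≤ ∞ and 0 ≤ ℓ ≤ K with ℓ < θ + N(1 − 1/q). If p(N+θ) > K+N, then, setting A_p := N(p−1)/θ (> 1) and F(x,t) := F(x,t,u(x,t)), there exists C > 0 such that E_{K,q}[F](t) ≤ C(t+1)^{K/θ − A_p} for all t > 0 and all 1 ≤ q ≤ ∞. -/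

import Mathlib

open MeasureTheory Real Set Filter Topology
open scoped ENNReal RealInnerProductSpace Classical

noncomputable section

/-- The fundamental solution `G_θ` of the fractional diffusion equation. -/
def fracKer (N : ℕ) (θ : ℝ) (x : EuclideanSpace ℝ (Fin N)) (t : ℝ) : ℝ :=
  (2 * Real.pi) ^ (-(N : ℝ) / 2) *
    ∫ ξ : EuclideanSpace ℝ (Fin N), Real.cos ⟪x, ξ⟫ * Real.exp (-t * ‖ξ‖ ^ θ)

/-- Partial derivative in the `i`-th coordinate direction. -/
def pderivE (N : ℕ) (i : Fin N) (f : EuclideanSpace ℝ (Fin N) → ℝ)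
    (x : EuclideanSpace ℝ (Fin N)) : ℝ :=
  fderiv ℝ f x (EuclideanSpace.single i 1)

/-- Multi-index spatial derivative `∂_x^α`. -/
def mderiv (N : ℕ) (α : Fin N → ℕ) (f : EuclideanSpace ℝ (Fin N) → ℝ) :
    EuclideanSpace ℝ (Fin N) → ℝ :=
  (List.finRange N).foldr (fun i g => (pderivE N i)^[α i] g) f

/-- `∂_t^m ∂_x^α G_θ`. -/
def kerDeriv (N : ℕ) (θ : ℝ) (m : ℕ) (α : Fin N → ℕ)
    (x : EuclideanSpace ℝ (Fin N)) (t : ℝ) : ℝ :=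
  mderiv N α (fun y => deriv^[m] (fracKer N θ y) t) x

/-- `g_{α,m}(x,t) = ((-1)^{|α|+m}/(α! m!)) (∂_t^m ∂_x^α G_θ)(x,t+1)`. -/
def gKer (N : ℕ) (θ : ℝ) (α : Fin N → ℕ) (m : ℕ)
    (x : EuclideanSpace ℝ (Fin N)) (t : ℝ) : ℝ :=
  ((-1 : ℝ) ^ (∑ i, α i + m) /
      ((∏ i, (Nat.factorial (α i) : ℝ)) * (Nat.factorial m : ℝ))) *
    kerDeriv N θ m α x (t + 1)

/-- The weighted norm `|||f|||_{q,ℓ}`, the `L^q` norm of `x ↦ |x|^ℓ f(x)`. -/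
def wnorm (N : ℕ) {V : Type*} [NormedAddCommGroup V] [NormedSpace ℝ V]
    (q : ℝ≥0∞) (ℓ : ℝ) (f : EuclideanSpace ℝ (Fin N) → V) : ℝ≥0∞ :=
  eLpNorm (fun x => ‖x‖ ^ ℓ • f x) q volume

/-- Membership in the weighted space `L^q_ℓ`. -/
def MemLqW (N : ℕ) (q : ℝ≥0∞) (ℓ : ℝ) (f : EuclideanSpace ℝ (Fin N) → ℝ) : Prop :=
  MemLp f q volume ∧ wnorm N q ℓ f < ⊤

/-- The moment `M_α(f) = ∫ x^α f(x) dx`. -/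
def moment (N : ℕ) (α : Fin N → ℕ) (f : EuclideanSpace ℝ (Fin N) → ℝ) : ℝ :=
  ∫ x : EuclideanSpace ℝ (Fin N), (∏ i, x i ^ α i) * f x

/-- The finite set of multi-indices `α` with `|α| ≤ K`. -/
def multiIdx (N : ℕ) (K : ℝ) : Finset (Fin N → ℕ) :=
  (Fintype.piFinset fun _ : Fin N => Finset.range (⌊K⌋₊ + 1)).filter
    fun α => ((∑ i, α i : ℕ) : ℝ) ≤ K

/-- The quantity `E_{K,q}[f](t)`. -/
def Enorm (N : ℕ) {V : Type*} [NormedAddCommGroup V] [NormedSpace ℝ V]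
    (θ K : ℝ) (q : ℝ≥0∞) (f : ℝ → EuclideanSpace ℝ (Fin N) → V) (t : ℝ) : ℝ≥0∞ :=
  ENNReal.ofReal ((t + 1) ^ (K / θ)) *
      (ENNReal.ofReal (t ^ (((N : ℝ) / θ) * (1 - 1 / q.toReal))) * eLpNorm (f t) q volume +
        eLpNorm (f t) 1 volume) +
    ENNReal.ofReal (t ^ (((N : ℝ) / θ) * (1 - 1 / q.toReal))) * wnorm N q K (f t) +
    wnorm N 1 K (f t)

/-- A (mild) solution of `∂_t u + (-Δ)^{θ/2} u = f`, `u(0) = φ`. -/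
def IsSol (N : ℕ) (θ : ℝ) (φ : EuclideanSpace ℝ (Fin N) → ℝ)
    (f : ℝ → EuclideanSpace ℝ (Fin N) → ℝ)
    (u : EuclideanSpace ℝ (Fin N) → ℝ → ℝ) : Prop :=
  ContinuousOn (fun p : EuclideanSpace ℝ (Fin N) × ℝ => u p.1 p.2) (univ ×ˢ Ioi 0) ∧
    ∀ (x : EuclideanSpace ℝ (Fin N)) (t : ℝ), 0 < t →
      u x t = (∫ y, fracKer N θ (x - y) t * φ y) +
        ∫ s in Ioo (0 : ℝ) t, ∫ y, fracKer N θ (x - y) (t - s) * f s y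

/-- The asymptotic expansion `w`. -/
def wProfile (N : ℕ) (θ K : ℝ) (φ : EuclideanSpace ℝ (Fin N) → ℝ)
    (f : ℝ → EuclideanSpace ℝ (Fin N) → ℝ)
    (x : EuclideanSpace ℝ (Fin N)) (t : ℝ) : ℝ :=
  ∑ m ∈ Finset.range (⌊K / θ⌋₊ + 1), ∑ α ∈ multiIdx N K,
    (moment N α φ + ∫ s in Ioo (0 : ℝ) t, (s + 1) ^ m * moment N α (f s)) *
      gKer N θ α m x t


section Helpers

open ENNReal in
lemma my_interp {α : Type*} [MeasurableSpace α] {μ : Measure α} {E : Type*}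
    [NormedAddCommGroup E] (g : α → E) (hg : AEStronglyMeasurable g μ)
    (q : ℝ≥0∞) (hq : 1 ≤ q) :
    eLpNorm g q μ ≤ eLpNorm g 1 μ ^ (1 / q.toReal) * eLpNorm g ⊤ μ ^ (1 - 1 / q.toReal) := by
  rcases eq_or_ne q ⊤ with rfl | hqt
  · simp
  rcases eq_or_ne q 1 with rfl | hq1
  · simp
  have hr1 : 1 ≤ q.toReal := by
    simpa using ENNReal.toReal_mono hqt hq
  have hr0 : (0:ℝ) < q.toReal := lt_of_lt_of_le one_pos hr1
  set r := q.toReal with hrdef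
  by_cases hL : eLpNorm g 1 μ = 0
  · have hg0 : g =ᵐ[μ] 0 := (eLpNorm_eq_zero_iff hg one_ne_zero).mp hL
    rw [eLpNorm_congr_ae hg0, eLpNorm_zero]
    exact zero_le
  by_cases hT : eLpNorm g ⊤ μ = ⊤
  · have h1 : (1:ℝ) - 1/r > 0 := by
      have : 1/r < 1 := by
        rw [div_lt_one hr0]
        rcases lt_or_eq_of_le hr1 with h | h
        · exact h
        · exact absurd ((ENNReal.toReal_eq_one_iff q).mp h.symm) hq1
      linarith
    rw [hT, ENNReal.top_rpow_of_pos h1, ENNReal.mul_top]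
    · exact le_top
    · intro h
      rcases (ENNReal.rpow_eq_zero_iff).mp h with ⟨h0, _⟩ | ⟨ht, hlt⟩
      · exact hL h0
      · exact absurd hlt (not_lt.mpr (by positivity))
  have hkey : ∀ᵐ x ∂μ, (‖g x‖₊ : ℝ≥0∞) ^ r ≤ (‖g x‖₊ : ℝ≥0∞) * eLpNormEssSup g μ ^ (r - 1) := by
    filter_upwards [enorm_ae_le_eLpNormEssSup g μ] with x hx
    calc (‖g x‖₊ : ℝ≥0∞) ^ r = (‖g x‖₊ : ℝ≥0∞) ^ (1 + (r-1)) := by ring_nf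
      _ = (‖g x‖₊ : ℝ≥0∞) ^ (1:ℝ) * (‖g x‖₊ : ℝ≥0∞) ^ (r-1) := by
          rcases eq_or_ne (‖g x‖₊ : ℝ≥0∞) 0 with h0 | h0
          · rw [h0]
            rw [ENNReal.zero_rpow_of_pos (by linarith),
              ENNReal.zero_rpow_of_pos (by linarith : (0:ℝ) < 1)]
            simp
          · exact ENNReal.rpow_add _ _ h0 ENNReal.coe_ne_top
      _ ≤ (‖g x‖₊ : ℝ≥0∞) * eLpNormEssSup g μ ^ (r - 1) := by
          rw [ENNReal.rpow_one]
          exact mul_le_mul_right (ENNReal.rpow_le_rpow hx (by linarith)) _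
  have hTne : eLpNormEssSup g μ ^ (r-1) ≠ ⊤ := by
    rw [eLpNorm_exponent_top] at hT
    exact ENNReal.rpow_ne_top_of_nonneg (by linarith) hT
  calc eLpNorm g q μ = (∫⁻ x, (‖g x‖₊ : ℝ≥0∞) ^ r ∂μ) ^ (1/r) := by
        exact eLpNorm_eq_lintegral_rpow_enorm_toReal (zero_lt_one.trans_le hq).ne' hqt
    _ ≤ ((∫⁻ x, (‖g x‖₊ : ℝ≥0∞) ∂μ) * eLpNormEssSup g μ ^ (r-1)) ^ (1/r) := by
        apply ENNReal.rpow_le_rpow _ (by positivity)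
        calc ∫⁻ x, (‖g x‖₊ : ℝ≥0∞) ^ r ∂μ
            ≤ ∫⁻ x, (‖g x‖₊ : ℝ≥0∞) * eLpNormEssSup g μ ^ (r-1) ∂μ :=
              lintegral_mono_ae hkey
          _ = (∫⁻ x, (‖g x‖₊ : ℝ≥0∞) ∂μ) * eLpNormEssSup g μ ^ (r-1) :=
              lintegral_mul_const' _ _ hTne
    _ = eLpNorm g 1 μ ^ (1/r) * eLpNorm g ⊤ μ ^ (1 - 1/r) := by
        rw [ENNReal.mul_rpow_of_nonneg _ _ (by positivity), show (∫⁻ x, (‖g x‖₊ : ℝ≥0∞) ∂μ) = eLpNorm g 1 μ from (eLpNorm_one_eq_lintegral_enorm (f := g) (μ := μ)).symm,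
          eLpNorm_exponent_top, ← ENNReal.rpow_mul]
        congr 1
        field_simp

lemma dmul {s : ℝ} (hs : 0 < s) (e1 e2 : ℝ) :
    ENNReal.ofReal (s ^ e1) * ENNReal.ofReal (s ^ e2) = ENNReal.ofReal (s ^ (e1 + e2)) := by
  rw [← ENNReal.ofReal_mul (Real.rpow_nonneg hs.le _), ← Real.rpow_add hs]

lemma wnorm_pow_le (N : ℕ) (q : ℝ≥0∞) (ℓ p C₀ : ℝ) (hp1 : 1 ≤ p) (hC : 0 ≤ C₀) (hℓ : 0 ≤ ℓ)
    (f g : EuclideanSpace ℝ (Fin N) → ℝ) (hb : ∀ x, |f x| ≤ C₀ * |g x| ^ p) :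
    wnorm N q ℓ f ≤ ENNReal.ofReal C₀ * wnorm N (q * ENNReal.ofReal p) (ℓ / p) g ^ p := by
  have hp0 : (0:ℝ) < p := lt_of_lt_of_le one_pos hp1
  have h1 : ∀ x, ‖(‖x‖ ^ ℓ • f x : ℝ)‖ ≤
      ‖C₀ * ‖(fun y : EuclideanSpace ℝ (Fin N) => ‖y‖ ^ (ℓ/p) • g y) x‖ ^ p‖ := by
    intro x
    have hx : (0:ℝ) ≤ ‖x‖ ^ ℓ := Real.rpow_nonneg (norm_nonneg x) _
    have hx2 : (0:ℝ) ≤ ‖x‖ ^ (ℓ/p) := Real.rpow_nonneg (norm_nonneg x) _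
    have hB : (0:ℝ) ≤ C₀ * ‖(‖x‖ ^ (ℓ/p) • g x : ℝ)‖ ^ p := by positivity
    simp only [norm_smul, Real.norm_eq_abs, abs_of_nonneg hx, abs_of_nonneg hx2]
    rw [abs_of_nonneg (by positivity : (0:ℝ) ≤ C₀ * (‖x‖ ^ (ℓ/p) * |g x|) ^ p)]
    have key : (‖x‖ ^ (ℓ/p) * |g x|) ^ p = ‖x‖ ^ ℓ * |g x| ^ p := by
      rw [Real.mul_rpow hx2 (abs_nonneg _), ← Real.rpow_mul (norm_nonneg x),
        div_mul_cancel₀ ℓ hp0.ne']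
    rw [key]
    calc ‖x‖ ^ ℓ * |f x| ≤ ‖x‖ ^ ℓ * (C₀ * |g x| ^ p) :=
          mul_le_mul_of_nonneg_left (hb x) hx
      _ = C₀ * (‖x‖ ^ ℓ * |g x| ^ p) := by ring
  calc wnorm N q ℓ f
      ≤ eLpNorm (fun x => C₀ * ‖(fun y : EuclideanSpace ℝ (Fin N) => ‖y‖ ^ (ℓ/p) • g y) x‖ ^ p)
        q volume := eLpNorm_mono h1
    _ = eLpNorm (C₀ • (fun x => ‖(fun y : EuclideanSpace ℝ (Fin N) => ‖y‖ ^ (ℓ/p) • g y) x‖ ^ p))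
        q volume := rfl
    _ = (‖C₀‖₊ : ℝ≥0∞) *
        eLpNorm (fun x => ‖(fun y : EuclideanSpace ℝ (Fin N) => ‖y‖ ^ (ℓ/p) • g y) x‖ ^ p)
          q volume := eLpNorm_const_smul _ _ _ _
    _ = ENNReal.ofReal C₀ * wnorm N (q * ENNReal.ofReal p) (ℓ / p) g ^ p := by
        rw [show (‖C₀‖₊ : ℝ≥0∞) = ENNReal.ofReal C₀ from Real.enorm_eq_ofReal hC, eLpNorm_norm_rpow _ hp0]
        rfl

lemma step2 (N : ℕ) (p C₀ : ℝ) (hp1 : 1 ≤ p) (hC : 0 ≤ C₀) (Q : ℝ≥0∞) (L : ℝ) (hL : 0 ≤ L)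
    (f g : EuclideanSpace ℝ (Fin N) → ℝ) (hb : ∀ x, |f x| ≤ C₀ * |g x| ^ p)
    (Cg : ℝ≥0∞) (E s : ℝ) (hs : 0 < s)
    (hg : ENNReal.ofReal (s ^ E) * wnorm N (Q * ENNReal.ofReal p) (L / p) g ≤ Cg) :
    wnorm N Q L f ≤ ENNReal.ofReal C₀ * Cg ^ p * ENNReal.ofReal (s ^ (-E * p)) := by
  have hp0 : (0:ℝ) < p := lt_of_lt_of_le one_pos hp1
  have h2 : wnorm N (Q * ENNReal.ofReal p) (L / p) g ≤ Cg * ENNReal.ofReal (s ^ (-E)) := by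
    have hcan : ENNReal.ofReal (s ^ (-E)) * ENNReal.ofReal (s ^ E) = 1 := by
      rw [dmul hs, neg_add_cancel, Real.rpow_zero, ENNReal.ofReal_one]
    calc wnorm N (Q * ENNReal.ofReal p) (L / p) g
        = ENNReal.ofReal (s ^ (-E)) * (ENNReal.ofReal (s ^ E) *
            wnorm N (Q * ENNReal.ofReal p) (L / p) g) := by
          rw [← mul_assoc, hcan, one_mul]
      _ ≤ ENNReal.ofReal (s ^ (-E)) * Cg := mul_le_mul_right hg _
      _ = Cg * ENNReal.ofReal (s ^ (-E)) := mul_comm _ _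
  calc wnorm N Q L f ≤ ENNReal.ofReal C₀ * wnorm N (Q * ENNReal.ofReal p) (L / p) g ^ p :=
        wnorm_pow_le N Q L p C₀ hp1 hC hL f g hb
    _ ≤ ENNReal.ofReal C₀ * (Cg * ENNReal.ofReal (s ^ (-E))) ^ p :=
        mul_le_mul_right (ENNReal.rpow_le_rpow h2 hp0.le) _
    _ = ENNReal.ofReal C₀ * Cg ^ p * ENNReal.ofReal (s ^ (-E * p)) := by
        rw [ENNReal.mul_rpow_of_nonneg _ _ hp0.le,
          ENNReal.ofReal_rpow_of_pos (Real.rpow_pos_of_pos hs _),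
          ← Real.rpow_mul hs.le, mul_assoc]

lemma combine (B : ℝ≥0∞) (hB0 : B ≠ 0) (hBt : B ≠ ⊤) {s : ℝ} (hs : 0 < s) (e1 e2 l : ℝ)
    (hl0 : 0 ≤ l) (hl1 : l ≤ 1) (X Y : ℝ≥0∞)
    (h1 : X ≤ B * ENNReal.ofReal (s ^ e1)) (h2 : Y ≤ B * ENNReal.ofReal (s ^ e2)) :
    X ^ l * Y ^ (1 - l) ≤ B * ENNReal.ofReal (s ^ (e1 * l + e2 * (1 - l))) := by
  calc X ^ l * Y ^ (1-l)
      ≤ (B * ENNReal.ofReal (s ^ e1)) ^ l * (B * ENNReal.ofReal (s ^ e2)) ^ (1-l) :=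
        mul_le_mul' (ENNReal.rpow_le_rpow h1 hl0) (ENNReal.rpow_le_rpow h2 (by linarith))
    _ = (B ^ l * B ^ (1-l)) * (ENNReal.ofReal (s ^ e1) ^ l * ENNReal.ofReal (s ^ e2) ^ (1-l)) := by
        rw [ENNReal.mul_rpow_of_nonneg _ _ hl0, ENNReal.mul_rpow_of_nonneg _ _ (by linarith : (0:ℝ) ≤ 1 - l)]
        ring
    _ = B * ENNReal.ofReal (s ^ (e1 * l + e2 * (1 - l))) := by
        rw [← ENNReal.rpow_add _ _ hB0 hBt]
        norm_num
        rw [ENNReal.ofReal_rpow_of_pos (Real.rpow_pos_of_pos hs _),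
          ENNReal.ofReal_rpow_of_pos (Real.rpow_pos_of_pos hs _),
          ← Real.rpow_mul hs.le, ← Real.rpow_mul hs.le, dmul hs]

lemma wnorm_zero (N : ℕ) (q : ℝ≥0∞) (f : EuclideanSpace ℝ (Fin N) → ℝ) :
    wnorm N q (0:ℝ) f = eLpNorm f q volume := by
  unfold wnorm
  congr 1
  funext x
  rw [Real.rpow_zero, one_smul]

end Helpers

/-- Theorem 5.1 (b). -/
theorem nonlinear_term_Enorm_bound
    (N : ℕ) (hN : 1 ≤ N) (θ : ℝ) (hθ0 : 0 < θ) (hθ2 : θ < 2)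
    (K : ℝ) (hK0 : 0 ≤ K)
    (φ : EuclideanSpace ℝ (Fin N) → ℝ) (hφ1 : MemLqW N 1 K φ)
    (F : EuclideanSpace ℝ (Fin N) → ℝ → ℝ → ℝ) (p C₀ : ℝ)
    (hFc : ContinuousOn (fun z : EuclideanSpace ℝ (Fin N) × ℝ × ℝ => F z.1 z.2.1 z.2.2)
      (univ ×ˢ Ici 0 ×ˢ univ))
    (hF0 : ∀ x t, F x t 0 = 0)
    (hp : 1 + θ / N < p) (hC₀ : 0 < C₀)
    (hFL : ∀ x t v w, 0 ≤ t → |F x t v - F x t w| ≤ C₀ * (|v| + |w|) ^ (p - 1) * |v - w|)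
    (u : EuclideanSpace ℝ (Fin N) → ℝ → ℝ)
    (hu : IsSol N θ φ (fun s y => F y s (u y s)) u)
    (hgrow : ∀ q : ℝ≥0∞, 1 ≤ q → ∀ ℓ : ℝ, 0 ≤ ℓ → ℓ ≤ K →
      ℓ < θ + N * (1 - 1 / q.toReal) →
      ∃ C : ℝ≥0∞, C < ⊤ ∧ ∀ t : ℝ, 0 < t →
        ENNReal.ofReal ((t + 1) ^ (((N : ℝ) / θ) * (1 - 1 / q.toReal) - ℓ / θ)) *
          wnorm N q ℓ (fun x => u x t) ≤ C)
    (hpK : K + N < p * ((N : ℝ) + θ)) :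
    1 < (N : ℝ) * (p - 1) / θ ∧
    ∃ C : ℝ, 0 < C ∧ ∀ q : ℝ≥0∞, 1 ≤ q → ∀ t : ℝ, 0 < t →
      Enorm N θ K q (fun s y => F y s (u y s)) t ≤
        ENNReal.ofReal (C * (t + 1) ^ (K / θ - (N : ℝ) * (p - 1) / θ)) := by
  have hNpos : (0:ℝ) < N := by exact_mod_cast Nat.pos_of_ne_zero (by omega)
  have hθne : θ ≠ 0 := hθ0.ne'
  have hp1 : 1 < p := by
    have : 0 < θ / N := div_pos hθ0 hNpos
    linarith
  have hp0 : (0:ℝ) < p := by linarith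
  have hpne : p ≠ 0 := hp0.ne'
  have hAp : 1 < (N:ℝ) * (p-1) / θ := by
    rw [lt_div_iff₀ hθ0]
    have h2 : θ / N < p - 1 := by linarith
    have h3 : θ < (p - 1) * (N:ℝ) := (div_lt_iff₀ hNpos).mp h2
    linarith
  refine ⟨hAp, ?_⟩
  -- pointwise bound
  have hpt : ∀ (t : ℝ), 0 ≤ t → ∀ x, |F x t (u x t)| ≤ C₀ * |u x t| ^ p := by
    intro t ht x
    have h := hFL x t (u x t) 0 ht
    rw [hF0, sub_zero, sub_zero, abs_zero, add_zero] at h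
    rcases eq_or_ne (u x t) 0 with h0 | h0
    · rw [h0, hF0, abs_zero]
      positivity
    · have habs : 0 < |u x t| := abs_pos.mpr h0
      calc |F x t (u x t)| ≤ C₀ * |u x t| ^ (p-1) * |u x t| := h
        _ = C₀ * (|u x t| ^ (p-1) * |u x t|) := by ring
        _ = C₀ * |u x t| ^ p := by
            rw [← Real.rpow_add_one habs.ne' (p-1)]
            norm_num
  -- continuity
  have hFtm : ∀ t : ℝ, 0 < t → Continuous (fun x => F x t (u x t)) := by
    intro t ht
    have hut : Continuous (fun x : EuclideanSpace ℝ (Fin N) => u x t) := by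
      have h1 : Continuous (fun x : EuclideanSpace ℝ (Fin N) => (x, t)) :=
        continuous_id.prodMk continuous_const
      exact hu.1.comp_continuous h1 (fun x => ⟨Set.mem_univ _, ht⟩)
    have h2 : Continuous (fun x : EuclideanSpace ℝ (Fin N) => (x, t, u x t)) :=
      continuous_id.prodMk (continuous_const.prodMk hut)
    exact hFc.comp_continuous h2 (fun x => ⟨Set.mem_univ _, ht.le, Set.mem_univ _⟩)
  have hnormK : Continuous (fun x : EuclideanSpace ℝ (Fin N) => ‖x‖ ^ K) :=
    continuous_norm.rpow_const (fun x => Or.inr hK0)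
  -- basic exponent facts
  have hopt : ((1:ℝ≥0∞) * ENNReal.ofReal p).toReal = p := by
    rw [one_mul]; exact ENNReal.toReal_ofReal hp0.le
  have hop1 : (1:ℝ≥0∞) ≤ 1 * ENNReal.ofReal p := by
    rw [one_mul, ← ENNReal.ofReal_one]
    exact ENNReal.ofReal_le_ofReal hp1.le
  have hqT : (⊤:ℝ≥0∞) * ENNReal.ofReal p = ⊤ :=
    ENNReal.top_mul (ENNReal.ofReal_pos.mpr hp0).ne'
  have hinvp : 1/p ≤ 1 := by
    rw [div_le_one hp0]; exact hp1.le
  have hNfrac : (0:ℝ) ≤ (N:ℝ) * (1 - 1/p) := mul_nonneg hNpos.le (by linarith)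
  -- the four endpoint constants from hgrow
  obtain ⟨C1, hC1t, hC1⟩ := hgrow (1 * ENNReal.ofReal p) hop1 (0/p)
    (by rw [zero_div]) (by rw [zero_div]; exact hK0)
    (by rw [hopt, zero_div]; linarith)
  obtain ⟨C2, hC2t, hC2⟩ := hgrow (⊤ * ENNReal.ofReal p) (by rw [hqT]; exact le_top) (0/p)
    (by rw [zero_div]) (by rw [zero_div]; exact hK0)
    (by rw [hqT, ENNReal.toReal_top, zero_div, div_zero]; nlinarith)
  obtain ⟨C3, hC3t, hC3⟩ := hgrow (1 * ENNReal.ofReal p) hop1 (K/p)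
    (div_nonneg hK0 hp0.le) (div_le_self hK0 hp1.le)
    (by
      rw [hopt, div_lt_iff₀ hp0]
      have hexpand : (θ + (N:ℝ)*(1-1/p))*p = p*θ + (N:ℝ)*p - N := by
        field_simp
        ring
      rw [hexpand]
      have : p*((N:ℝ)+θ) = p*θ + (N:ℝ)*p := by ring
      linarith)
  obtain ⟨C4, hC4t, hC4⟩ := hgrow (⊤ * ENNReal.ofReal p) (by rw [hqT]; exact le_top) (K/p)
    (div_nonneg hK0 hp0.le) (div_le_self hK0 hp1.le)
    (by
      rw [hqT, ENNReal.toReal_top, div_zero]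
      rw [div_lt_iff₀ hp0]
      have : (θ + (N:ℝ)*(1 - 0))*p = p*((N:ℝ)+θ) := by ring
      rw [this]
      linarith)
  -- the uniform constant
  set B : ℝ≥0∞ := ENNReal.ofReal C₀ * (C1^p + C2^p + C3^p + C4^p) + 1 with hBdef
  have hB1 : 1 ≤ B := le_add_self
  have hB0 : B ≠ 0 := (lt_of_lt_of_le one_pos hB1).ne'
  have hBt : B ≠ ⊤ := by
    have h1 : C1^p ≠ ⊤ := ENNReal.rpow_ne_top_of_nonneg hp0.le hC1t.ne
    have h2 : C2^p ≠ ⊤ := ENNReal.rpow_ne_top_of_nonneg hp0.le hC2t.ne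
    have h3 : C3^p ≠ ⊤ := ENNReal.rpow_ne_top_of_nonneg hp0.le hC3t.ne
    have h4 : C4^p ≠ ⊤ := ENNReal.rpow_ne_top_of_nonneg hp0.le hC4t.ne
    exact ENNReal.add_ne_top.mpr ⟨ENNReal.mul_ne_top ENNReal.ofReal_ne_top
      (ENNReal.add_ne_top.mpr ⟨ENNReal.add_ne_top.mpr ⟨ENNReal.add_ne_top.mpr ⟨h1, h2⟩, h3⟩, h4⟩),
      ENNReal.one_ne_top⟩
  have hfac1 : ENNReal.ofReal C₀ * C1^p ≤ B := by
    calc ENNReal.ofReal C₀ * C1^p ≤ ENNReal.ofReal C₀ * (C1^p + C2^p + C3^p + C4^p) :=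
          mul_le_mul_right (by calc C1^p ≤ C1^p + C2^p := le_self_add
                                  _ ≤ C1^p + C2^p + C3^p := le_self_add
                                  _ ≤ _ := le_self_add) _
      _ ≤ B := le_self_add
  have hfac2 : ENNReal.ofReal C₀ * C2^p ≤ B := by
    calc ENNReal.ofReal C₀ * C2^p ≤ ENNReal.ofReal C₀ * (C1^p + C2^p + C3^p + C4^p) :=
          mul_le_mul_right (by calc C2^p ≤ C1^p + C2^p := le_add_self
                                  _ ≤ C1^p + C2^p + C3^p := le_self_add
                                  _ ≤ _ := le_self_add) _
      _ ≤ B := le_self_add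
  have hfac3 : ENNReal.ofReal C₀ * C3^p ≤ B := by
    calc ENNReal.ofReal C₀ * C3^p ≤ ENNReal.ofReal C₀ * (C1^p + C2^p + C3^p + C4^p) :=
          mul_le_mul_right (by calc C3^p ≤ C1^p + C2^p + C3^p := le_add_self
                                  _ ≤ _ := le_self_add) _
      _ ≤ B := le_self_add
  have hfac4 : ENNReal.ofReal C₀ * C4^p ≤ B := by
    calc ENNReal.ofReal C₀ * C4^p ≤ ENNReal.ofReal C₀ * (C1^p + C2^p + C3^p + C4^p) :=
          mul_le_mul_right le_add_self _
      _ ≤ B := le_self_add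
  set Ap : ℝ := (N:ℝ) * (p - 1) / θ with hApdef
  -- the four endpoint bounds
  have hW1 : ∀ t : ℝ, 0 < t →
      eLpNorm (fun x => F x t (u x t)) 1 volume ≤ B * ENNReal.ofReal ((t+1) ^ (-Ap)) := by
    intro t ht
    have hs : (0:ℝ) < t + 1 := by linarith
    have h := step2 N p C₀ hp1.le hC₀.le 1 0 le_rfl (fun x => F x t (u x t)) (fun x => u x t)
      (hpt t ht.le) C1 _ (t+1) hs (hC1 t ht)
    rw [wnorm_zero] at h
    refine le_trans h ?_
    rw [show (-(((N:ℝ)/θ) * (1 - 1/((1 * ENNReal.ofReal p)).toReal) - (0/p)/θ) * p) = -Ap by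
      rw [hopt, hApdef]
      field_simp
      ring]
    exact mul_le_mul_left hfac1 _
  have hW2 : ∀ t : ℝ, 0 < t →
      eLpNorm (fun x => F x t (u x t)) ⊤ volume ≤
        B * ENNReal.ofReal ((t+1) ^ (-((N:ℝ)/θ) - Ap)) := by
    intro t ht
    have hs : (0:ℝ) < t + 1 := by linarith
    have h := step2 N p C₀ hp1.le hC₀.le ⊤ 0 le_rfl (fun x => F x t (u x t)) (fun x => u x t)
      (hpt t ht.le) C2 _ (t+1) hs (hC2 t ht)
    rw [wnorm_zero] at h
    refine le_trans h ?_
    rw [show (-(((N:ℝ)/θ) * (1 - 1/((⊤ * ENNReal.ofReal p : ℝ≥0∞)).toReal) - (0/p)/θ) * p)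
        = -((N:ℝ)/θ) - Ap by
      rw [hqT, ENNReal.toReal_top, hApdef]
      field_simp
      ring]
    exact mul_le_mul_left hfac2 _
  have hW3 : ∀ t : ℝ, 0 < t →
      wnorm N 1 K (fun x => F x t (u x t)) ≤ B * ENNReal.ofReal ((t+1) ^ (K/θ - Ap)) := by
    intro t ht
    have hs : (0:ℝ) < t + 1 := by linarith
    have h := step2 N p C₀ hp1.le hC₀.le 1 K hK0 (fun x => F x t (u x t)) (fun x => u x t)
      (hpt t ht.le) C3 _ (t+1) hs (hC3 t ht)
    refine le_trans h ?_
    rw [show (-(((N:ℝ)/θ) * (1 - 1/((1 * ENNReal.ofReal p)).toReal) - (K/p)/θ) * p)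
        = K/θ - Ap by
      rw [hopt, hApdef]
      field_simp
      ring]
    exact mul_le_mul_left hfac3 _
  have hW4 : ∀ t : ℝ, 0 < t →
      wnorm N ⊤ K (fun x => F x t (u x t)) ≤
        B * ENNReal.ofReal ((t+1) ^ (K/θ - (N:ℝ)/θ - Ap)) := by
    intro t ht
    have hs : (0:ℝ) < t + 1 := by linarith
    have h := step2 N p C₀ hp1.le hC₀.le ⊤ K hK0 (fun x => F x t (u x t)) (fun x => u x t)
      (hpt t ht.le) C4 _ (t+1) hs (hC4 t ht)
    refine le_trans h ?_
    rw [show (-(((N:ℝ)/θ) * (1 - 1/((⊤ * ENNReal.ofReal p : ℝ≥0∞)).toReal) - (K/p)/θ) * p)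
        = K/θ - (N:ℝ)/θ - Ap by
      rw [hqT, ENNReal.toReal_top, hApdef]
      field_simp
      ring]
    exact mul_le_mul_left hfac4 _
  -- final constant
  refine ⟨4 * B.toReal + 1, by positivity, ?_⟩
  intro q hq t ht
  have hs : (0:ℝ) < t + 1 := by linarith
  set l : ℝ := 1 / q.toReal with hldef
  have hl0 : 0 ≤ l := by positivity
  have hl1 : l ≤ 1 := by
    rcases eq_or_ne q ⊤ with rfl | hqt
    · simp [hldef]
    · have h1 : 1 ≤ q.toReal := by simpa using ENNReal.toReal_mono hqt hq
      rw [hldef, div_le_one (by linarith)]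
      linarith
  set a : ℝ := ((N:ℝ)/θ) * (1 - 1/q.toReal) with hadef
  have ha0 : 0 ≤ a := mul_nonneg (div_nonneg hNpos.le hθ0.le) (by rw [← hldef]; linarith)
  -- interpolation for the unweighted term
  have hFtc := hFtm t ht
  have hLq : eLpNorm (fun x => F x t (u x t)) q volume ≤
      B * ENNReal.ofReal ((t+1) ^ (-Ap - a)) := by
    refine le_trans (my_interp _ hFtc.aestronglyMeasurable q hq) ?_
    have h := combine B hB0 hBt hs (-Ap) (-((N:ℝ)/θ) - Ap) l hl0 hl1 _ _ (hW1 t ht) (hW2 t ht)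
    rw [show (-Ap) * l + (-((N:ℝ)/θ) - Ap) * (1 - l) = -Ap - a by
      rw [hadef, hldef]; ring] at h
    exact h
  have hWq : wnorm N q K (fun x => F x t (u x t)) ≤
      B * ENNReal.ofReal ((t+1) ^ (K/θ - Ap - a)) := by
    have hgKc : Continuous (fun x : EuclideanSpace ℝ (Fin N) =>
        ‖x‖ ^ K • F x t (u x t)) := hnormK.smul hFtc
    refine le_trans (my_interp _ hgKc.aestronglyMeasurable q hq) ?_
    have h := combine B hB0 hBt hs (K/θ - Ap) (K/θ - (N:ℝ)/θ - Ap) l hl0 hl1 _ _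
      (hW3 t ht) (hW4 t ht)
    rw [show (K/θ - Ap) * l + (K/θ - (N:ℝ)/θ - Ap) * (1 - l) = K/θ - Ap - a by
      rw [hadef, hldef]; ring] at h
    exact h
  have hoT : ENNReal.ofReal (t ^ a) ≤ ENNReal.ofReal ((t+1) ^ a) :=
    ENNReal.ofReal_le_ofReal (Real.rpow_le_rpow ht.le (by linarith) ha0)
  -- assemble
  have hT1 : ENNReal.ofReal ((t+1) ^ (K/θ)) *
      (ENNReal.ofReal (t ^ a) * eLpNorm (fun x => F x t (u x t)) q volume) ≤
      B * ENNReal.ofReal ((t+1) ^ (K/θ - Ap)) := by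
    calc ENNReal.ofReal ((t+1) ^ (K/θ)) *
        (ENNReal.ofReal (t ^ a) * eLpNorm (fun x => F x t (u x t)) q volume)
        ≤ ENNReal.ofReal ((t+1) ^ (K/θ)) *
          (ENNReal.ofReal ((t+1) ^ a) * (B * ENNReal.ofReal ((t+1) ^ (-Ap - a)))) :=
          mul_le_mul_right (mul_le_mul' hoT hLq) _
      _ = B * (ENNReal.ofReal ((t+1) ^ (K/θ)) * ENNReal.ofReal ((t+1) ^ a) *
            ENNReal.ofReal ((t+1) ^ (-Ap - a))) := by ring
      _ = B * ENNReal.ofReal ((t+1) ^ (K/θ - Ap)) := by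
          rw [dmul hs, dmul hs, show K/θ + a + (-Ap - a) = K/θ - Ap from by ring]
  have hT2 : ENNReal.ofReal ((t+1) ^ (K/θ)) * eLpNorm (fun x => F x t (u x t)) 1 volume ≤
      B * ENNReal.ofReal ((t+1) ^ (K/θ - Ap)) := by
    calc ENNReal.ofReal ((t+1) ^ (K/θ)) * eLpNorm (fun x => F x t (u x t)) 1 volume
        ≤ ENNReal.ofReal ((t+1) ^ (K/θ)) * (B * ENNReal.ofReal ((t+1) ^ (-Ap))) :=
          mul_le_mul_right (hW1 t ht) _
      _ = B * (ENNReal.ofReal ((t+1) ^ (K/θ)) * ENNReal.ofReal ((t+1) ^ (-Ap))) := by ring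
      _ = B * ENNReal.ofReal ((t+1) ^ (K/θ - Ap)) := by
          rw [dmul hs, show K/θ + -Ap = K/θ - Ap from by ring]
  have hT3 : ENNReal.ofReal (t ^ a) * wnorm N q K (fun x => F x t (u x t)) ≤
      B * ENNReal.ofReal ((t+1) ^ (K/θ - Ap)) := by
    calc ENNReal.ofReal (t ^ a) * wnorm N q K (fun x => F x t (u x t))
        ≤ ENNReal.ofReal ((t+1) ^ a) * (B * ENNReal.ofReal ((t+1) ^ (K/θ - Ap - a))) :=
          mul_le_mul' hoT hWq
      _ = B * (ENNReal.ofReal ((t+1) ^ a) * ENNReal.ofReal ((t+1) ^ (K/θ - Ap - a))) := by ring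
      _ = B * ENNReal.ofReal ((t+1) ^ (K/θ - Ap)) := by
          rw [dmul hs, show a + (K/θ - Ap - a) = K/θ - Ap from by ring]
  have hsum : Enorm N θ K q (fun s y => F y s (u y s)) t ≤
      4 * B * ENNReal.ofReal ((t+1) ^ (K/θ - Ap)) := by
    rw [Enorm]
    calc ENNReal.ofReal ((t + 1) ^ (K / θ)) *
          (ENNReal.ofReal (t ^ (((N:ℝ) / θ) * (1 - 1 / q.toReal))) *
            eLpNorm (fun y => F y t (u y t)) q volume +
           eLpNorm (fun y => F y t (u y t)) 1 volume) +
          ENNReal.ofReal (t ^ (((N:ℝ) / θ) * (1 - 1 / q.toReal))) *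
            wnorm N q K (fun y => F y t (u y t)) +
          wnorm N 1 K (fun y => F y t (u y t))
        ≤ (B * ENNReal.ofReal ((t+1) ^ (K/θ - Ap)) + B * ENNReal.ofReal ((t+1) ^ (K/θ - Ap))) +
          B * ENNReal.ofReal ((t+1) ^ (K/θ - Ap)) + B * ENNReal.ofReal ((t+1) ^ (K/θ - Ap)) := by
          refine add_le_add (add_le_add ?_ ?_) ?_
          · rw [mul_add]
            exact add_le_add hT1 hT2
          · exact hT3
          · exact hW3 t ht
      _ = 4 * B * ENNReal.ofReal ((t+1) ^ (K/θ - Ap)) := by ring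
  refine le_trans hsum ?_
  have h4B : 4 * B ≤ ENNReal.ofReal (4 * B.toReal + 1) := by
    have hne : (4:ℝ≥0∞) * B ≠ ⊤ := ENNReal.mul_ne_top (by simp) hBt
    calc (4:ℝ≥0∞) * B = ENNReal.ofReal (((4:ℝ≥0∞) * B).toReal) :=
          (ENNReal.ofReal_toReal hne).symm
      _ ≤ ENNReal.ofReal (4 * B.toReal + 1) := by
          apply ENNReal.ofReal_le_ofReal
          rw [ENNReal.toReal_mul]
          norm_num
  calc 4 * B * ENNReal.ofReal ((t+1) ^ (K/θ - Ap))
      ≤ ENNReal.ofReal (4 * B.toReal + 1) * ENNReal.ofReal ((t+1) ^ (K/θ - Ap)) :=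
        mul_le_mul_left h4B _
    _ = ENNReal.ofReal ((4 * B.toReal + 1) * (t + 1) ^ (K / θ - Ap)) :=
        (ENNReal.ofReal_mul (by positivity)).symm
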